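/- Let T', T'' be two binary trees that both resolve a multifurcated tree T, and let v be a multifurcated node of T with children u_1,...,u_p. Let B', B'' be the subtrees of T', T'' whose edge contractions restore the multifurcation at v. Then under any fixed leaf ordering σ with OLA node indexing, the internal nodes of B' and B'' receive the same set of indices, namely S = {-s_i : 1 ≤ i ≤ p and there exists j with s_j < s_i}, where s_i is the minimum leaf index in the subtree below u_i. -/

import Mathlib

open scoped Classical

namespace OLA

/-- Rooted binary phylogenetic trees with `ℕ`-labeled leaves. -/
inductive BTree where
  | leaf (x : ℕ)
  | node (l r : BTree)
deriving DecidableEq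

namespace BTree

def leafList : BTree → List ℕ
  | .leaf x => [x]
  | .node l r => leafList l ++ leafList r

def leafSet (t : BTree) : Finset ℕ := t.leafList.toFinset

/-- `t` is a phylogenetic tree on the leaf set `{0, …, n-1}`. -/
def IsPhylo (t : BTree) (n : ℕ) : Prop :=
  t.leafList.Nodup ∧ t.leafSet = Finset.range n

def minLeaf : BTree → ℕ
  | .leaf x => x
  | .node l r => min (minLeaf l) (minLeaf r)

/-- OLA index of the root of a (sub)tree: leaf label, or minus the second
smallest of the minimal leaves of the two children. -/
def idx : BTree → ℤ
  | .leaf x => (x : ℤ)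
  | .node l r => -(max (minLeaf l) (minLeaf r) : ℤ)

/-- Restriction `T^i` of `t` to the leaves labeled `≤ i` (suppressing
degree-2 nodes); `none` if no such leaf exists. -/
def restrictLe : BTree → ℕ → Option BTree
  | .leaf x, i => if x ≤ i then some (.leaf x) else none
  | .node l r, i =>
    match restrictLe l i, restrictLe r i with
    | some l', some r' => some (.node l' r')
    | some l', none => some l'
    | none, some r' => some r'
    | none, none => none

/-- Restriction `T|_S` of `t` to the leaves in `S` (suppressing degree-2 nodes). -/
def restrictTo : BTree → Finset ℕ → Option BTree
  | .leaf x, S => if x ∈ S then some (.leaf x) else none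
  | .node l r, S =>
    match restrictTo l S, restrictTo r S with
    | some l', some r' => some (.node l' r')
    | some l', none => some l'
    | none, some r' => some r'
    | none, none => none

/-- OLA index of the sibling of the leaf labeled `i`, if it exists. -/
def siblingIdx : BTree → ℕ → Option ℤ
  | .leaf _, _ => none
  | .node l r, i =>
    if l = .leaf i then some r.idx
    else if r = .leaf i then some l.idx
    else (siblingIdx l i).orElse (fun _ => siblingIdx r i)

/-- The OLA vector entry of `t` at position `i ≥ 1`: the index of the sibling
of leaf `i` in the restriction of `t` to leaves `0, …, i`. -/
def olaEntry (t : BTree) (i : ℕ) : ℤ :=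
  ((t.restrictLe i).bind (fun t' => t'.siblingIdx i)).getD 0

def relabel (f : ℕ → ℕ) : BTree → BTree
  | .leaf x => .leaf (f x)
  | .node l r => .node (relabel f l) (relabel f r)

/-- The set of clusters (leaf sets of rooted subtrees) of `t`.  Two leaf-labeled
trees over the same leaf set are isomorphic iff their cluster sets coincide. -/
def clusters : BTree → Set (Set ℕ)
  | .leaf x => {{x}}
  | .node l r => insert {y | y ∈ (node l r).leafList} (clusters l ∪ clusters r)

def subtreeAt : BTree → List Bool → Option BTree
  | t, [] => some t
  | .leaf _, _ :: _ => none
  | .node l _, false :: p => subtreeAt l p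
  | .node _ r, true :: p => subtreeAt r p

/-- `w` occurs as a rooted subtree (i.e. the subtree below a node) of `t`. -/
def IsNode (t w : BTree) : Prop := ∃ p, t.subtreeAt p = some w

/-- The position of the least common ancestor of the leaves in `S`. -/
def lcaPos : BTree → Finset ℕ → List Bool
  | .leaf _, _ => []
  | .node l r, S =>
    if S ⊆ l.leafSet then false :: lcaPos l S
    else if S ⊆ r.leafSet then true :: lcaPos r S
    else []

/-- Positions of the nodes of the minimal spanning subtree `T(S)`. -/
def spanNodes (t : BTree) (S : Finset ℕ) : Set (List Bool) :=
  {p | t.lcaPos S <+: p ∧ ∃ u, t.subtreeAt p = some u ∧ ∃ x ∈ S, x ∈ u.leafList}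

end BTree

/-- OLA vector of tree `t` under the leaf ordering `σ` (leaf `x` is the
`σ x`-th leaf in the order). -/
def ola (t : BTree) (σ : Equiv.Perm ℕ) (i : ℕ) : ℤ :=
  (t.relabel σ).olaEntry i

/-- `σ` is a valid leaf ordering of the leaf set `{0, …, n-1}`. -/
def IsOrdering (σ : Equiv.Perm ℕ) (n : ℕ) : Prop := ∀ x < n, σ x < n

/-- The set of (corrected) mismatched indices among `{1, …, i}` of a family of
OLA vectors: an index is mismatched if two of the vectors differ there, or if
all vectors place that leaf above the internal node created by an
already-mismatched leaf. -/
noncomputable def mismatch {ι : Type*} (v : ι → ℕ → ℤ) : ℕ → Finset ℕ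
  | 0 => ∅
  | i + 1 =>
    let M := mismatch v i
    if (∃ a b : ι, v a (i+1) ≠ v b (i+1)) ∨ (∃ j ∈ M, ∀ a : ι, v a (i+1) = -(j : ℤ))
    then insert (i+1) M else M

/-- Corrected OLA distance of a family of OLA vectors of trees on `n` leaves. -/
noncomputable def corrDist {ι : Type*} (v : ι → ℕ → ℤ) (n : ℕ) : ℕ :=
  (mismatch v (n-1)).card

/-- Hamming OLA distance: the number of indices where at least two vectors differ. -/
noncomputable def hamDist {ι : Type*} (v : ι → ℕ → ℤ) (n : ℕ) : ℕ :=
  ((Finset.Icc 1 (n-1)).filter fun i => ∃ a b : ι, v a i ≠ v b i).card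

/-- `comp` is an agreement forest for the trees `ts` over leaf set `{0,…,n-1}`:
components have pairwise disjoint leaf sets partitioning the full leaf set,
each tree restricted to a component's leaves is isomorphic to the component,
and the spanning subtrees are node-disjoint in each tree. -/
def IsAF {ι : Type*} (ts : ι → BTree) (n : ℕ) {f : ℕ} (comp : Fin f → BTree) : Prop :=
  (∀ i, (comp i).leafList.Nodup) ∧
  (∀ i j, i ≠ j → Disjoint (comp i).leafSet (comp j).leafSet) ∧
  (Finset.univ.biUnion (fun i => (comp i).leafSet) = Finset.range n) ∧
  (∀ a i, ∃ c, (ts a).restrictTo (comp i).leafSet = some c ∧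
      c.clusters = (comp i).clusters) ∧
  (∀ a i j, i ≠ j →
      Disjoint (BTree.spanNodes (ts a) ((comp i).leafSet))
               (BTree.spanNodes (ts a) ((comp j).leafSet)))

/-- Edge of the inheritance graph: some tree has a directed path from the root
of the spanning subtree of component `i` down to that of component `j`. -/
def inhEdge {ι : Type*} (ts : ι → BTree) {f : ℕ} (comp : Fin f → BTree)
    (i j : Fin f) : Prop :=
  i ≠ j ∧ ∃ a, (BTree.lcaPos (ts a) ((comp i).leafSet)) <+:
      (BTree.lcaPos (ts a) ((comp j).leafSet))

/-- `comp` is an acyclic agreement forest for `ts`. -/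
def IsAAF {ι : Type*} (ts : ι → BTree) (n : ℕ) {f : ℕ} (comp : Fin f → BTree) : Prop :=
  IsAF ts n comp ∧ ∀ i, ¬ Relation.TransGen (inhEdge ts comp) i i

/-- Size of a maximum acyclic agreement forest (an AAF with fewest components). -/
noncomputable def maafSize {ι : Type*} (ts : ι → BTree) (n : ℕ) : ℕ :=
  sInf {f | ∃ comp : Fin f → BTree, IsAAF ts n comp}

end OLA
namespace OLA

/-- Multifurcated (not necessarily binary) rooted trees with `ℕ`-labeled leaves. -/
inductive MTree where
  | leaf (x : ℕ)
  | node (cs : List MTree)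

namespace MTree

def leafList : MTree → List ℕ
  | .leaf x => [x]
  | .node cs => cs.attach.flatMap (fun c => leafList c.1)
decreasing_by have := List.sizeOf_lt_of_mem c.2; simp_wf; omega

def leafSet (t : MTree) : Finset ℕ := t.leafList.toFinset

def minLeaf (t : MTree) : ℕ := t.leafList.min?.getD 0

def IsPhyloM (t : MTree) (n : ℕ) : Prop :=
  t.leafList.Nodup ∧ t.leafSet = Finset.range n

def clusters : MTree → Set (Set ℕ)
  | .leaf x => {{x}}
  | .node cs =>
      insert {y | y ∈ (MTree.node cs).leafList}
        ((cs.attach.map (fun c => clusters c.1)).foldr (· ∪ ·) ∅)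
decreasing_by have := List.sizeOf_lt_of_mem c.2; simp_wf; omega

def childrenOrSelf : MTree → List MTree
  | .leaf x => [.leaf x]
  | .node cs => cs

def relabelM (f : ℕ → ℕ) : MTree → MTree
  | .leaf x => .leaf (f x)
  | .node cs => .node (cs.attach.map fun c => relabelM f c.1)
decreasing_by have := List.sizeOf_lt_of_mem c.2; simp_wf; omega

/-- `s` occurs as a rooted subtree of `t`. -/
inductive Subtree : MTree → MTree → Prop
  | refl (t : MTree) : Subtree t t
  | child {s c : MTree} {cs : List MTree} : c ∈ cs → Subtree s c → Subtree s (.node cs)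

/-- Restriction of `t` to leaves labeled `≤ i`, suppressing degree-2 nodes. -/
def restrictLe : MTree → ℕ → Option MTree
  | .leaf x, i => if x ≤ i then some (.leaf x) else none
  | .node cs, i =>
    match cs.attach.filterMap (fun c => restrictLe c.1 i) with
    | [] => none
    | [c] => some c
    | cs' => some (.node cs')
decreasing_by have := List.sizeOf_lt_of_mem c.2; simp_wf; omega

end MTree

/-- Contract, in the binary tree `t`, the edges above the (internal) nodes at the
positions selected by `sel`; the result is a multifurcated tree. -/
def BTree.contract : BTree → (List Bool → Bool) → MTree
  | .leaf x, _ => .leaf x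
  | .node l r, sel =>
    let lm := BTree.contract l (fun p => sel (false :: p))
    let rm := BTree.contract r (fun p => sel (true :: p))
    .node ((if sel [false] then lm.childrenOrSelf else [lm]) ++
           (if sel [true] then rm.childrenOrSelf else [rm]))

/-- A binary tree `t'` resolves the multifurcated tree `t`: contracting some set
of internal edges of `t'` yields a tree isomorphic to `t`. -/
def Resolves (t' : BTree) (t : MTree) : Prop :=
  ∃ sel : List Bool → Bool,
    (t'.contract sel).leafList.Perm t.leafList ∧
    (t'.contract sel).clusters = t.clusters

/-- The minimum possible size of an acyclic agreement forest over all
binary resolutions of the multifurcated trees `ms`. -/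
noncomputable def minResMaaf {ι : Type*} (ms : ι → MTree) (n : ℕ) : ℕ :=
  sInf {f | ∃ bs : ι → BTree, (∀ a, Resolves (bs a) (ms a)) ∧
      ∃ comp : Fin f → BTree, IsAAF bs n comp}

end OLA

/-!
Contracting edges only deletes clusters, so every child cluster `U i` of the multifurcated
node, and their union, are clusters of the resolution `t'`. Clusters of a binary tree are
laminar, so a node of `t'` whose cluster is a union of at least two `U i` has each `U i` inside
one of its two children; the minimal leaves of the children are then two distinct `s i`, and
the node's index is minus the larger one. Conversely, if `s j < s i`, walk down from the node
above all the `U k` towards `U i` while the current node still contains a leaf smaller than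
`s i`: at the last such node the child containing `U i` has minimum `s i` and the other child a
smaller minimum, so that node has index `-s i`.
-/

namespace OLA

open Function

namespace BTree

@[simp] theorem leafSet_leaf (x : ℕ) : (BTree.leaf x).leafSet = {x} := rfl

theorem leafSet_node (l r : BTree) : (BTree.node l r).leafSet = l.leafSet ∪ r.leafSet := by
  ext x; simp [leafSet, leafList]

theorem mem_leafSet {t : BTree} {x : ℕ} : x ∈ t.leafSet ↔ x ∈ t.leafList := by
  simp [leafSet]

theorem leafSet_nonempty : ∀ t : BTree, t.leafSet.Nonempty
  | .leaf x => ⟨x, by simp⟩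
  | .node l _ => (leafSet_nonempty l).mono (by simp [leafSet_node])

theorem minLeaf_mem : ∀ t : BTree, t.minLeaf ∈ t.leafSet
  | .leaf x => by simp [minLeaf]
  | .node l r => by
    rw [leafSet_node, minLeaf]
    rcases min_choice l.minLeaf r.minLeaf with h | h <;> rw [h]
    · exact Finset.mem_union_left _ (minLeaf_mem l)
    · exact Finset.mem_union_right _ (minLeaf_mem r)

theorem minLeaf_le_of_mem : ∀ {t : BTree} {y : ℕ}, y ∈ t.leafSet → t.minLeaf ≤ y
  | .leaf x, y, hy => by simp_all [minLeaf]
  | .node l r, y, hy => by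
    rw [leafSet_node, Finset.mem_union] at hy
    rcases hy with hy | hy
    · exact (min_le_left _ _).trans (minLeaf_le_of_mem hy)
    · exact (min_le_right _ _).trans (minLeaf_le_of_mem hy)

theorem idx_node_of_minLeaf_eq {l r : BTree} {x : ℕ} (hlt : (BTree.node l r).minLeaf < x)
    (hx : l.minLeaf = x ∨ r.minLeaf = x) : (BTree.node l r).idx = -(x : ℤ) := by
  simp only [minLeaf] at hlt
  simp only [idx, neg_inj]
  omega

theorem disjoint_leafSet_of_nodup {l r : BTree} (h : (BTree.node l r).leafList.Nodup) :
    Disjoint l.leafSet r.leafSet := by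
  rw [leafSet, leafSet, List.disjoint_toFinset_iff_disjoint]
  exact fun x hl hr => (List.nodup_append.1 h).2.2 x hl x hr rfl

theorem subtreeAt_nil (t : BTree) : t.subtreeAt [] = some t := by cases t <;> rfl

theorem subtreeAt_append : ∀ (t : BTree) (p q : List Bool),
    t.subtreeAt (p ++ q) = (t.subtreeAt p).bind (·.subtreeAt q)
  | t, [], q => by rw [subtreeAt_nil, List.nil_append]; rfl
  | .leaf _, false :: _, _ => rfl
  | .leaf _, true :: _, _ => rfl
  | .node l _, false :: p, q => subtreeAt_append l p q
  | .node _ r, true :: p, q => subtreeAt_append r p q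

theorem IsNode.refl (t : BTree) : t.IsNode t := ⟨[], subtreeAt_nil t⟩

theorem IsNode.trans {t u w : BTree} (h₁ : t.IsNode u) (h₂ : u.IsNode w) : t.IsNode w := by
  obtain ⟨p, hp⟩ := h₁
  obtain ⟨q, hq⟩ := h₂
  exact ⟨p ++ q, by rw [subtreeAt_append, hp]; exact hq⟩

theorem isNode_left (l r : BTree) : (BTree.node l r).IsNode l := ⟨[false], subtreeAt_nil l⟩

theorem isNode_right (l r : BTree) : (BTree.node l r).IsNode r := ⟨[true], subtreeAt_nil r⟩

theorem isNode_leaf_iff {x : ℕ} {w : BTree} : (BTree.leaf x).IsNode w ↔ w = .leaf x := by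
  refine ⟨fun ⟨p, hp⟩ => ?_, fun h => h ▸ IsNode.refl _⟩
  match p with
  | [] => exact (Option.some.inj ((subtreeAt_nil _).symm.trans hp)).symm
  | _ :: _ => simp [subtreeAt] at hp

theorem isNode_node_iff {l r w : BTree} :
    (BTree.node l r).IsNode w ↔ w = .node l r ∨ l.IsNode w ∨ r.IsNode w := by
  constructor
  · rintro ⟨p, hp⟩
    match p with
    | [] => exact Or.inl (Option.some.inj ((subtreeAt_nil _).symm.trans hp)).symm
    | false :: p => exact Or.inr (Or.inl ⟨p, hp⟩)
    | true :: p => exact Or.inr (Or.inr ⟨p, hp⟩)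
  · rintro (rfl | h | h)
    · exact IsNode.refl _
    · exact (isNode_left l r).trans h
    · exact (isNode_right l r).trans h

theorem IsNode.leafList_sublist {t w : BTree} (h : t.IsNode w) :
    w.leafList.Sublist t.leafList := by
  induction t with
  | leaf x => rw [isNode_leaf_iff.1 h]
  | node l r ihl ihr =>
    rcases isNode_node_iff.1 h with rfl | h | h
    · exact List.Sublist.refl _
    · exact (ihl h).trans (List.sublist_append_left _ _)
    · exact (ihr h).trans (List.sublist_append_right _ _)

theorem IsNode.leafSet_subset {t w : BTree} (h : t.IsNode w) : w.leafSet ⊆ t.leafSet :=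
  fun _ hx => mem_leafSet.2 (h.leafList_sublist.subset (mem_leafSet.1 hx))

theorem mem_clusters_iff {t : BTree} {S : Set ℕ} :
    S ∈ t.clusters ↔ ∃ w, t.IsNode w ∧ S = ↑w.leafSet := by
  induction t generalizing S with
  | leaf x =>
    simp only [clusters, Set.mem_singleton_iff, isNode_leaf_iff, exists_eq_left, leafSet_leaf,
      Finset.coe_singleton]
  | node l r ihl ihr =>
    have hroot : {y | y ∈ (BTree.node l r).leafList} = ↑(BTree.node l r).leafSet := by
      ext; simp [leafSet]
    simp only [clusters, Set.mem_insert_iff, Set.mem_union, ihl, ihr, isNode_node_iff,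
      or_and_right, exists_or, exists_eq_left, hroot]

theorem isNode_of_leafSet_subset {t : BTree} (ht : t.leafList.Nodup) {v w : BTree}
    (hv : t.IsNode v) (hw : t.IsNode w) (hwv : w.leafSet ⊆ v.leafSet) : v.IsNode w := by
  induction t generalizing v w with
  | leaf x =>
    rw [isNode_leaf_iff] at hv hw
    exact hv ▸ hw ▸ IsNode.refl _
  | node l r ihl ihr =>
    have hlr := disjoint_leafSet_of_nodup ht
    have hl := (isNode_left l r).leafList_sublist.nodup ht
    have hr := (isNode_right l r).leafList_sublist.nodup ht
    obtain ⟨y, hy⟩ := leafSet_nonempty w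
    rcases isNode_node_iff.1 hv with rfl | hv | hv
    · exact hw
    all_goals rcases isNode_node_iff.1 hw with rfl | hw | hw
    · obtain ⟨z, hz⟩ := leafSet_nonempty r
      exact absurd (hv.leafSet_subset (hwv (by simp [leafSet_node, hz])))
        (Finset.disjoint_right.1 hlr hz)
    · exact ihl hl hv hw hwv
    · exact absurd (hw.leafSet_subset hy)
        (Finset.disjoint_left.1 hlr (hv.leafSet_subset (hwv hy)))
    · obtain ⟨z, hz⟩ := leafSet_nonempty l
      exact absurd (hv.leafSet_subset (hwv (by simp [leafSet_node, hz])))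
        (Finset.disjoint_left.1 hlr hz)
    · exact absurd (hv.leafSet_subset (hwv hy))
        (Finset.disjoint_left.1 hlr (hw.leafSet_subset hy))
    · exact ihr hr hv hw hwv

theorem leafSet_subset_left_or_right {t l r w : BTree} (ht : t.leafList.Nodup)
    (hn : t.IsNode (.node l r)) (hw : t.IsNode w) (hsub : w.leafSet ⊆ (BTree.node l r).leafSet)
    (hne : w.leafSet ≠ (BTree.node l r).leafSet) :
    w.leafSet ⊆ l.leafSet ∨ w.leafSet ⊆ r.leafSet := by
  rcases isNode_node_iff.1 (isNode_of_leafSet_subset ht hn hw hsub) with rfl | h | h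
  · exact absurd rfl hne
  · exact Or.inl h.leafSet_subset
  · exact Or.inr h.leafSet_subset

end BTree

namespace MTree

theorem mem_leafSet {t : MTree} {x : ℕ} : x ∈ t.leafSet ↔ x ∈ t.leafList := by
  simp [leafSet]

theorem leafList_node (cs : List MTree) : (MTree.node cs).leafList = cs.flatMap leafList := by
  rw [leafList, List.flatMap_def, List.flatMap_def, List.attach_map_val]

theorem leafSet_node (cs : List MTree) :
    (MTree.node cs).leafSet = Finset.univ.biUnion fun i : Fin cs.length => (cs.get i).leafSet := by
  ext x
  simp only [mem_leafSet, leafList_node, List.mem_flatMap, Finset.mem_biUnion, Finset.mem_univ,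
    true_and, List.exists_mem_iff_getElem, List.get_eq_getElem]
  exact ⟨fun ⟨i, hi, hx⟩ => ⟨⟨i, hi⟩, hx⟩, fun ⟨i, hx⟩ => ⟨i, i.2, hx⟩⟩

theorem pairwise_disjoint_leafSet {cs : List MTree} (h : (MTree.node cs).leafList.Nodup) :
    Pairwise (Disjoint on fun i : Fin cs.length => (cs.get i).leafSet) := by
  rw [leafList_node, List.nodup_flatMap] at h
  have hcs : cs.Pairwise (Disjoint on leafSet) :=
    h.2.imp fun hd => List.disjoint_toFinset_iff_disjoint.2 hd
  intro i j hij
  rcases hij.lt_or_gt with hlt | hlt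
  · exact hcs.rel_get_of_lt hlt
  · exact (hcs.rel_get_of_lt hlt).symm

theorem mem_clusters_node {cs : List MTree} {S : Set ℕ} :
    S ∈ (MTree.node cs).clusters ↔
      S = {y | y ∈ (MTree.node cs).leafList} ∨ ∃ c ∈ cs, S ∈ c.clusters := by
  have hfold : ∀ L : List (Set (Set ℕ)), S ∈ L.foldr (· ∪ ·) ∅ ↔ ∃ C ∈ L, S ∈ C := by
    intro L; induction L <;> simp_all
  rw [clusters, Set.mem_insert_iff, hfold]
  simp

theorem coe_leafSet_mem_clusters : ∀ t : MTree, ↑t.leafSet ∈ t.clusters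
  | .leaf x => by simp [leafSet, leafList, clusters]
  | .node cs => mem_clusters_node.2 (Or.inl (by ext; simp [leafSet]))

theorem Subtree.clusters_subset {s t : MTree} (h : Subtree s t) : s.clusters ⊆ t.clusters := by
  induction h with
  | refl => exact subset_rfl
  | child hc _ ih => exact ih.trans fun S hS => mem_clusters_node.2 (Or.inr ⟨_, hc, hS⟩)

theorem Subtree.leafList_sublist {s t : MTree} (h : Subtree s t) :
    s.leafList.Sublist t.leafList := by
  induction h with
  | refl => exact List.Sublist.refl _
  | child hc _ ih =>
    rw [leafList_node]
    exact ih.trans (by simpa using (List.singleton_sublist.2 hc).flatMap leafList)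

theorem isLeast_minLeaf {t : MTree} (h : t.leafSet.Nonempty) :
    IsLeast (↑t.leafSet) t.minLeaf := by
  obtain ⟨m, hm⟩ :=
    Option.isSome_iff_exists.1 (List.isSome_min?_of_mem (mem_leafSet.1 h.choose_spec))
  rw [minLeaf, hm, Option.getD_some]
  rw [List.min?_eq_some_iff] at hm
  exact ⟨mem_leafSet.2 hm.1, fun y hy => hm.2 y (mem_leafSet.1 hy)⟩

end MTree

theorem contract_leafList : ∀ (t : BTree) (sel : List Bool → Bool),
    (t.contract sel).leafList = t.leafList
  | .leaf x, _ => by simp [BTree.contract, MTree.leafList, BTree.leafList]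
  | .node l r, sel => by
    have hkeep : ∀ (m : MTree) (b : Bool),
        (if b then m.childrenOrSelf else [m]).flatMap MTree.leafList = m.leafList := by
      intro m b
      cases b
      · simp
      · cases m <;> simp [MTree.childrenOrSelf, MTree.leafList_node]
    rw [BTree.contract, MTree.leafList_node, List.flatMap_append, hkeep, hkeep,
      contract_leafList l, contract_leafList r]
    rfl

theorem contract_clusters_subset : ∀ (t : BTree) (sel : List Bool → Bool),
    (t.contract sel).clusters ⊆ t.clusters
  | .leaf x, _ => by simp [BTree.contract, MTree.clusters, BTree.clusters]
  | .node l r, sel => by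
    have hkeep : ∀ (m c : MTree) (b : Bool),
        c ∈ (if b then m.childrenOrSelf else [m]) → c.clusters ⊆ m.clusters := by
      intro m c b hc
      cases b
      · rw [List.mem_singleton.1 hc]
      · cases m with
        | leaf x => rw [List.mem_singleton.1 hc]
        | node cs => exact fun S hS => MTree.mem_clusters_node.2 (Or.inr ⟨c, hc, hS⟩)
    intro S hS
    have hroot := contract_leafList (.node l r) sel
    rw [BTree.contract] at hS hroot
    rw [BTree.clusters, Set.mem_insert_iff, Set.mem_union]
    rcases MTree.mem_clusters_node.1 hS with h | ⟨c, hc, hS⟩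
    · exact Or.inl (hroot ▸ h)
    · rcases List.mem_append.1 hc with hc | hc
      · exact Or.inr (Or.inl (contract_clusters_subset l _ (hkeep _ c _ hc hS)))
      · exact Or.inr (Or.inr (contract_clusters_subset r _ (hkeep _ c _ hc hS)))

theorem Resolves.clusters_subset {t' : BTree} {T : MTree} (h : Resolves t' T) :
    T.clusters ⊆ t'.clusters := by
  obtain ⟨sel, -, hcl⟩ := h
  exact hcl ▸ contract_clusters_subset t' sel

theorem biUnion_filter_subset_eq {ι α : Type*} [DecidableEq α] {A : Finset ι} {U : ι → Finset α}
    {S : Finset α} (hS : S ⊆ A.biUnion U) (hU : ∀ i ∈ A, U i ⊆ S ∨ Disjoint (U i) S) :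
    (A.filter (U · ⊆ S)).biUnion U = S := by
  ext x
  simp only [Finset.mem_biUnion, Finset.mem_filter]
  refine ⟨fun ⟨i, ⟨_, hiS⟩, hx⟩ => hiS hx, fun hx => ?_⟩
  obtain ⟨i, hi, hxi⟩ := Finset.mem_biUnion.1 (hS hx)
  refine ⟨i, ⟨hi, (hU i hi).resolve_right fun hd => ?_⟩, hxi⟩
  exact Finset.disjoint_left.1 hd hxi hx

structure DisjointClusters {ι : Type*} (t : BTree) (U : ι → Finset ℕ) (s : ι → ℕ) : Prop where
  nodup : t.leafList.Nodup
  exists_isNode : ∀ i, ∃ w, t.IsNode w ∧ w.leafSet = U i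
  pairwise_disjoint : Pairwise (Disjoint on U)
  isLeast : ∀ i, IsLeast (↑(U i)) (s i)

namespace DisjointClusters

open BTree

variable {ι : Type*} {t : BTree} {U : ι → Finset ℕ} {s : ι → ℕ} {A : Finset ι}

theorem injective (h : DisjointClusters t U s) : Injective s := fun i j hij => by
  by_contra hne
  exact Finset.disjoint_left.1 (h.pairwise_disjoint hne) (h.isLeast i).1 (hij ▸ (h.isLeast j).1)

theorem mem_biUnion (h : DisjointClusters t U s) {i : ι} (hi : i ∈ A) : s i ∈ A.biUnion U :=
  Finset.mem_biUnion.2 ⟨i, hi, (h.isLeast i).1⟩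

theorem exists_minLeaf_eq (h : DisjointClusters t U s) {w : BTree}
    (hw : w.leafSet = A.biUnion U) : ∃ k ∈ A, w.minLeaf = s k := by
  obtain ⟨k, hk, hmem⟩ := Finset.mem_biUnion.1 (hw ▸ minLeaf_mem w)
  have hsk : s k ∈ w.leafSet := hw ▸ h.mem_biUnion hk
  exact ⟨k, hk, le_antisymm (minLeaf_le_of_mem hsk) ((h.isLeast k).2 hmem)⟩

theorem subset_left_or_right (h : DisjointClusters t U s) {l r : BTree}
    (hn : t.IsNode (.node l r)) (hA : (BTree.node l r).leafSet = A.biUnion U)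
    (hcard : 2 ≤ A.card) {i : ι} (hi : i ∈ A) : U i ⊆ l.leafSet ∨ U i ⊆ r.leafSet := by
  obtain ⟨w, hw, hwU⟩ := h.exists_isNode i
  obtain ⟨k, hk, hki⟩ := Finset.exists_mem_ne hcard i
  rw [← hwU]
  refine leafSet_subset_left_or_right h.nodup hn hw ?_ fun heq => ?_
  · exact hwU ▸ hA ▸ Finset.subset_biUnion_of_mem U hi
  · have hsk : s k ∈ w.leafSet := heq ▸ hA ▸ h.mem_biUnion hk
    exact Finset.disjoint_left.1 (h.pairwise_disjoint hki) (h.isLeast k).1 (hwU ▸ hsk)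

theorem biUnion_filter_subset_left (h : DisjointClusters t U s) {l r : BTree}
    (hn : t.IsNode (.node l r)) (hA : (BTree.node l r).leafSet = A.biUnion U)
    (hcard : 2 ≤ A.card) : (A.filter (U · ⊆ l.leafSet)).biUnion U = l.leafSet := by
  have hlr := disjoint_leafSet_of_nodup (hn.leafList_sublist.nodup h.nodup)
  refine biUnion_filter_subset_eq (hA ▸ leafSet_node l r ▸ Finset.subset_union_left) fun i hi => ?_
  exact (h.subset_left_or_right hn hA hcard hi).imp_right fun hr => (hlr.mono_right hr).symm

theorem biUnion_filter_subset_right (h : DisjointClusters t U s) {l r : BTree}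
    (hn : t.IsNode (.node l r)) (hA : (BTree.node l r).leafSet = A.biUnion U)
    (hcard : 2 ≤ A.card) : (A.filter (U · ⊆ r.leafSet)).biUnion U = r.leafSet := by
  have hlr := disjoint_leafSet_of_nodup (hn.leafList_sublist.nodup h.nodup)
  refine biUnion_filter_subset_eq (hA ▸ leafSet_node l r ▸ Finset.subset_union_right) fun i hi => ?_
  exact (h.subset_left_or_right hn hA hcard hi).symm.imp_right fun hl => hlr.mono_left hl

theorem exists_idx_eq (h : DisjointClusters t U s) {w : BTree} (hn : t.IsNode w)
    (hcard : 2 ≤ A.card) (hw : w.leafSet = A.biUnion U) :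
    ∃ i, w.idx = -(s i : ℤ) ∧ ∃ j, s j < s i := by
  cases w with
  | leaf x =>
    obtain ⟨a, ha, b, hb, hab⟩ := Finset.one_lt_card.1 hcard
    have hsa := h.mem_biUnion ha
    have hsb := h.mem_biUnion hb
    rw [← hw, leafSet_leaf, Finset.mem_singleton] at hsa hsb
    exact absurd (h.injective (hsa.trans hsb.symm)) hab
  | node l r =>
    obtain ⟨a, -, ha⟩ := h.exists_minLeaf_eq (h.biUnion_filter_subset_left hn hw hcard).symm
    obtain ⟨b, -, hb⟩ := h.exists_minLeaf_eq (h.biUnion_filter_subset_right hn hw hcard).symm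
    have hne : s a ≠ s b := by
      rw [← ha, ← hb]
      exact fun heq => Finset.disjoint_left.1
        (disjoint_leafSet_of_nodup (hn.leafList_sublist.nodup h.nodup))
        (minLeaf_mem l) (heq ▸ minLeaf_mem r)
    rcases hne.lt_or_gt with hab | hab
    · exact ⟨b, by simp [idx, ha, hb, hab.le], a, hab⟩
    · exact ⟨a, by simp [idx, ha, hb, hab.le], b, hab⟩

theorem exists_isNode_idx_eq (h : DisjointClusters t U s) {w : BTree} (hn : t.IsNode w)
    (hw : w.leafSet = A.biUnion U) {i : ι} (hi : i ∈ A) (hlt : w.minLeaf < s i) :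
    ∃ w', w.IsNode w' ∧ w'.idx = -(s i : ℤ) ∧
      ∃ B : Finset ι, 2 ≤ B.card ∧ w'.leafSet = B.biUnion U := by
  induction w generalizing A with
  | leaf x =>
    have hsi := h.mem_biUnion hi
    rw [← hw, leafSet_leaf, Finset.mem_singleton] at hsi
    simp [minLeaf, hsi] at hlt
  | node l r ihl ihr =>
    obtain ⟨k, hk, hmin⟩ := h.exists_minLeaf_eq hw
    have hcard : 2 ≤ A.card := Finset.one_lt_card.2 ⟨i, hi, k, hk, by rintro rfl; omega⟩
    by_cases hdesc : (l.minLeaf < s i ∧ U i ⊆ l.leafSet) ∨ (r.minLeaf < s i ∧ U i ⊆ r.leafSet)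
    · rcases hdesc with ⟨hlt', hsub⟩ | ⟨hlt', hsub⟩
      · obtain ⟨w', hw', hidx⟩ := ihl (hn.trans (isNode_left l r))
          (h.biUnion_filter_subset_left hn hw hcard).symm (Finset.mem_filter.2 ⟨hi, hsub⟩) hlt'
        exact ⟨w', (isNode_left l r).trans hw', hidx⟩
      · obtain ⟨w', hw', hidx⟩ := ihr (hn.trans (isNode_right l r))
          (h.biUnion_filter_subset_right hn hw hcard).symm (Finset.mem_filter.2 ⟨hi, hsub⟩) hlt'
        exact ⟨w', (isNode_right l r).trans hw', hidx⟩
    · refine ⟨_, IsNode.refl _, idx_node_of_minLeaf_eq hlt ?_, A, hcard, hw⟩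
      rcases h.subset_left_or_right hn hw hcard hi with hsub | hsub
      · exact Or.inl (le_antisymm (minLeaf_le_of_mem (hsub (h.isLeast i).1))
          (not_lt.1 fun h' => hdesc (Or.inl ⟨h', hsub⟩)))
      · exact Or.inr (le_antisymm (minLeaf_le_of_mem (hsub (h.isLeast i).1))
          (not_lt.1 fun h' => hdesc (Or.inr ⟨h', hsub⟩)))

end DisjointClusters

theorem MTree.Subtree.trans {r s t : MTree} (h₁ : Subtree r s) (h₂ : Subtree s t) :
    Subtree r t := by
  induction h₂ with
  | refl => exact h₁
  | child hc _ ih => exact .child hc ih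

theorem Resolves.exists_isNode_leafSet_eq {t' : BTree} {T m : MTree} (hres : Resolves t' T)
    (hm : MTree.Subtree m T) : ∃ w, t'.IsNode w ∧ w.leafSet = m.leafSet := by
  obtain ⟨w, hw, hwm⟩ := BTree.mem_clusters_iff.1
    (hres.clusters_subset (hm.clusters_subset (MTree.coe_leafSet_mem_clusters m)))
  exact ⟨w, hw, Finset.coe_injective hwm.symm⟩

theorem Resolves.disjointClusters {t' : BTree} {T : MTree} (hres : Resolves t' T)
    (hT : T.leafList.Nodup) (ht' : t'.leafList.Nodup) {cs : List MTree}
    (hcs : MTree.Subtree (.node cs) T) :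
    DisjointClusters t' (fun i : Fin cs.length => (cs.get i).leafSet)
      (fun i => (cs.get i).minLeaf) := by
  have hchild (i : Fin cs.length) : MTree.Subtree (cs.get i) T :=
    (MTree.Subtree.child (List.get_mem cs i) (.refl _)).trans hcs
  refine ⟨ht', fun i => hres.exists_isNode_leafSet_eq (hchild i),
    MTree.pairwise_disjoint_leafSet (hcs.leafList_sublist.nodup hT), fun i => ?_⟩
  obtain ⟨w, -, hw⟩ := hres.exists_isNode_leafSet_eq (hchild i)
  exact MTree.isLeast_minLeaf (hw ▸ BTree.leafSet_nonempty w)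

end OLA

open OLA in
theorem stmt11_general (n : ℕ) (T : MTree) (hT : T.IsPhyloM n)
    (t' : BTree) (ht' : t'.IsPhylo n) (hres : Resolves t' T)
    (cs : List MTree) (hsub : MTree.Subtree (.node cs) T) :
    {z : ℤ | ∃ w : BTree, t'.IsNode w ∧ w.idx = z ∧
        ∃ A : Finset (Fin cs.length), 2 ≤ A.card ∧
          w.leafSet = A.biUnion (fun i => (cs.get i).leafSet)} =
    {z : ℤ | ∃ i : Fin cs.length, z = -((cs.get i).minLeaf : ℤ) ∧
        ∃ j : Fin cs.length, (cs.get j).minLeaf < (cs.get i).minLeaf} := by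
  have hU := hres.disjointClusters hT.1 ht'.1 hsub
  obtain ⟨v, hv, hvU⟩ := hres.exists_isNode_leafSet_eq hsub
  rw [MTree.leafSet_node] at hvU
  ext z
  constructor
  · rintro ⟨w, hw, rfl, A, hA, hwA⟩
    exact hU.exists_idx_eq hw hA hwA
  · rintro ⟨i, rfl, j, hji⟩
    have hvj := BTree.minLeaf_le_of_mem (hvU ▸ hU.mem_biUnion (Finset.mem_univ j))
    obtain ⟨w, hw, hidx⟩ := hU.exists_isNode_idx_eq hv hvU (Finset.mem_univ i) (hvj.trans_lt hji)
    exact ⟨w, hv.trans hw, hidx⟩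

open OLA in
/-- Observation 1: for any binary resolution `t'` of a
multifurcated tree `T` and any multifurcated node of `T` with children
`u_1, …, u_p`, the internal nodes of the resolving subtree (the nodes of `t'`
whose cluster is a union of at least two of the children's clusters) are
indexed exactly by `S = {-s_i : ∃ j, s_j < s_i}`, where `s_i` is the minimum
leaf index below `u_i`; in particular, the set is the same for any two
resolutions. -/
theorem stmt11 (n : ℕ) (T : MTree) (hT : T.IsPhyloM n)
    (t' : BTree) (ht' : t'.IsPhylo n) (hres : Resolves t' T)
    (cs : List MTree) (hsub : MTree.Subtree (.node cs) T) (hmulti : 3 ≤ cs.length) :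
    {z : ℤ | ∃ w : BTree, t'.IsNode w ∧ w.idx = z ∧
        ∃ A : Finset (Fin cs.length), 2 ≤ A.card ∧
          w.leafSet = A.biUnion (fun i => (cs.get i).leafSet)} =
    {z : ℤ | ∃ i : Fin cs.length, z = -((cs.get i).minLeaf : ℤ) ∧
        ∃ j : Fin cs.length, (cs.get j).minLeaf < (cs.get i).minLeaf} :=
  stmt11_general n T hT t' ht' hres cs hsub
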